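/- For the optimal cubic-spline filter ψ of Proposition 1 with weight w ≡ 1 and delay d ≥ 0, the error system E(z) = z^{-d} - ψ(z)φ(z) is allpass up to scaling: |E(e^{iθ})| = |α₁|^{-d} for every θ ∈ [0, 2π), where α₁ = -2-√3 and φ(z) = (1/6)+(2/3)z⁻¹+(1/6)z⁻². -/

import Mathlib

noncomputable def alpha1 : ℂ := ((-2 - Real.sqrt 3 : ℝ) : ℂ)
noncomputable def alpha2 : ℂ := ((-2 + Real.sqrt 3 : ℝ) : ℂ)

/-- The sampled cubic B-spline transfer function `φ(z) = 1/6 + (2/3)z⁻¹ + (1/6)z⁻²`. -/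
noncomputable def phiCubic (z : ℂ) : ℂ := 1/6 + (2/3) * z⁻¹ + (1/6) * z⁻¹ ^ 2

/-- The `H^∞` optimal filter `ψ(z) = 6z²(z^{-d} - α₁^{-d}) / ((z-α₁)(z-α₂))`. -/
noncomputable def psiOpt (d : ℕ) (z : ℂ) : ℂ :=
  6 * z ^ 2 * (z ^ (-(d : ℤ)) - alpha1 ^ (-(d : ℤ))) / ((z - alpha1) * (z - alpha2))

/-! The filter `ψ` is built so that `ψ φ = z^{-d} - α₁^{-d}`: the factor `6z²` and the
denominator cancel exactly the factorisation `φ(z) = (z - α₁)(z - α₂) / (6z²)`, valid because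
`α₁, α₂` are the roots of `z² + 4z + 1`. Hence the error `z^{-d} - ψ φ` is the constant
`α₁^{-d}`, whose modulus is `(2 + √3)^{-d}`; on the unit circle `z` is never `0`, `α₁` or `α₂`. -/

lemma one_lt_sqrt_three : 1 < Real.sqrt 3 := by
  simpa using Real.sqrt_lt_sqrt zero_le_one (show (1 : ℝ) < 3 by norm_num)

lemma alpha1_mul_alpha2 : alpha1 * alpha2 = 1 := by
  have h : ((Real.sqrt 3 : ℝ) : ℂ) ^ 2 = 3 := by
    rw [← Complex.ofReal_pow, Real.sq_sqrt (by norm_num)]; norm_num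
  unfold alpha1 alpha2
  push_cast
  linear_combination -h

lemma alpha1_add_alpha2 : alpha1 + alpha2 = -4 := by
  unfold alpha1 alpha2; push_cast; ring

lemma norm_alpha1 : ‖alpha1‖ = 2 + Real.sqrt 3 := by
  rw [alpha1, Complex.norm_real, Real.norm_eq_abs, abs_of_neg (by linarith [one_lt_sqrt_three])]
  ring

lemma norm_alpha2 : ‖alpha2‖ = 2 - Real.sqrt 3 := by
  have h3 : Real.sqrt 3 < 2 := by
    rw [Real.sqrt_lt' two_pos]; norm_num
  rw [alpha2, Complex.norm_real, Real.norm_eq_abs, abs_of_neg (by linarith)]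
  ring

lemma phiCubic_eq {z : ℂ} (hz : z ≠ 0) :
    phiCubic z = (z - alpha1) * (z - alpha2) / (6 * z ^ 2) := by
  rw [phiCubic, eq_div_iff (by simpa using hz)]
  field_simp
  linear_combination -3 * alpha1_mul_alpha2 + 3 * z * alpha1_add_alpha2

lemma psiOpt_mul_phiCubic (d : ℕ) {z : ℂ} (hz : z ≠ 0) (h1 : z ≠ alpha1) (h2 : z ≠ alpha2) :
    psiOpt d z * phiCubic z = z ^ (-(d : ℤ)) - alpha1 ^ (-(d : ℤ)) := by
  have hden : (z - alpha1) * (z - alpha2) * (6 * z ^ 2) ≠ 0 := by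
    simp [sub_ne_zero.2 h1, sub_ne_zero.2 h2, hz]
  rw [phiCubic_eq hz, psiOpt, div_mul_div_comm, div_eq_iff hden]
  ring

lemma norm_sub_psiOpt_mul_phiCubic_of_norm_eq_one (d : ℕ) {z : ℂ} (hz : ‖z‖ = 1) :
    ‖z ^ (-(d : ℤ)) - psiOpt d z * phiCubic z‖ = (2 + Real.sqrt 3) ^ (-(d : ℤ)) := by
  have h0 : z ≠ 0 := by rintro rfl; simp at hz
  have h1 : z ≠ alpha1 := by
    rintro rfl; rw [norm_alpha1] at hz; linarith [one_lt_sqrt_three]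
  have h2 : z ≠ alpha2 := by
    rintro rfl; rw [norm_alpha2] at hz; linarith [one_lt_sqrt_three]
  rw [psiOpt_mul_phiCubic d h0 h1 h2, sub_sub_cancel, norm_zpow, norm_alpha1]

/-- For the optimal cubic-spline filter with unit weight and delay `d`, the error system
`E(z) = z^{-d} - ψ(z)φ(z)` is allpass: its magnitude on the unit circle is constantly
`|α₁|^{-d} = (2+√3)^{-d}`. -/
theorem stmt19 (d : ℕ) : ∀ θ : ℝ,
    ‖(Complex.exp (θ * Complex.I)) ^ (-(d : ℤ)) -
        psiOpt d (Complex.exp (θ * Complex.I)) * phiCubic (Complex.exp (θ * Complex.I))‖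
      = (2 + Real.sqrt 3) ^ (-(d : ℤ)) := fun θ =>
  norm_sub_psiOpt_mul_phiCubic_of_norm_eq_one d (Complex.norm_exp_ofReal_mul_I θ)
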